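/- The language { aⁿ bᵐ | n ≥ m ≥ 1 } is generated by a 1-D cellular automaton of radius 1 over {a, b, ⊥} from the regular set of initial configurations ⊥^ω a* a b ⊥^ω. Specifically, with local rule f mapping ⊥⊥⊥ ↦ ⊥; ⊥⊥a, ⊥aa, ⊥ab, aaa, aab ↦ a; ab⊥, abb, b⊥⊥, bb⊥, bbb ↦ b (arbitrary elsewhere), starting from ⊥^ω a^k b ⊥^ω (k ≥ 1) one has G^n of this configuration equal to ⊥^ω a^{k+n} b^{n+1} ⊥^ω, and the union over all k ≥ 1 and n ≥ 0 of the words a^{k+n} b^{n+1} equals { aⁿ bᵐ | n ≥ m ≥ 1 }. -/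
import Mathlib


/-- Global map of a 1-D cellular automaton of radius `r` with local rule `f`. -/
def glob {α : Type*} (r : ℕ) (f : (Fin (2 * r + 1) → α) → α) (c : ℤ → α) : ℤ → α :=
  fun z => f (fun j => c (z + (j.val : ℤ) - (r : ℤ)))

/-- The finite configuration `⊥^ω w ⊥^ω`, with `w` placed at positions `0, …, |w| - 1`. -/
def padW {α : Type*} (bot : α) (w : List α) : ℤ → α :=
  fun z => if 0 ≤ z ∧ z < (w.length : ℤ) then w.getD z.toNat bot else bot

/-- The alphabet `{a, b, ⊥}`. -/
inductive AB : Type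
  | a : AB
  | b : AB
  | bot : AB
deriving DecidableEq

/-- The radius-1 local rule: `⊥⊥⊥ ↦ ⊥`; `⊥⊥a, ⊥aa, ⊥ab, aaa, aab ↦ a`;
`ab⊥, abb, b⊥⊥, bb⊥, bbb ↦ b`; `⊥` elsewhere. -/
def fab : (Fin (2 * 1 + 1) → AB) → AB := fun w =>
  match w 0, w 1, w 2 with
  | AB.bot, AB.bot, AB.bot => AB.bot
  | AB.bot, AB.bot, AB.a => AB.a
  | AB.bot, AB.a, AB.a => AB.a
  | AB.bot, AB.a, AB.b => AB.a
  | AB.a, AB.a, AB.a => AB.a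
  | AB.a, AB.a, AB.b => AB.a
  | AB.a, AB.b, AB.bot => AB.b
  | AB.a, AB.b, AB.b => AB.b
  | AB.b, AB.bot, AB.bot => AB.b
  | AB.b, AB.b, AB.bot => AB.b
  | AB.b, AB.b, AB.b => AB.b
  | _, _, _ => AB.bot

def fab' : AB → AB → AB → AB
  | AB.bot, AB.bot, AB.bot => AB.bot
  | AB.bot, AB.bot, AB.a => AB.a
  | AB.bot, AB.a, AB.a => AB.a
  | AB.bot, AB.a, AB.b => AB.a
  | AB.a, AB.a, AB.a => AB.a
  | AB.a, AB.a, AB.b => AB.a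
  | AB.a, AB.b, AB.bot => AB.b
  | AB.a, AB.b, AB.b => AB.b
  | AB.b, AB.bot, AB.bot => AB.b
  | AB.b, AB.b, AB.bot => AB.b
  | AB.b, AB.b, AB.b => AB.b
  | _, _, _ => AB.bot

lemma fab_eq (w : Fin (2*1+1) → AB) : fab w = fab' (w 0) (w 1) (w 2) := by
  rcases h0 : w 0 <;> rcases h1 : w 1 <;> rcases h2 : w 2 <;> simp [fab, fab', h0, h1, h2]

lemma glob_fab (c : ℤ → AB) (z : ℤ) :
    glob 1 fab c z = fab' (c (z-1)) (c z) (c (z+1)) := by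
  show fab _ = _
  rw [fab_eq]
  have e2 : ((2:Fin (2*1+1)).val : ℤ) = 2 := rfl
  have e1 : ((1:Fin (2*1+1)).val : ℤ) = 1 := rfl
  have e0 : ((0:Fin (2*1+1)).val : ℤ) = 0 := rfl
  have er : ((1:ℕ):ℤ) = 1 := rfl
  rw [e0, e1, e2, er, show z+0-1 = z-1 by omega, show z+1-1 = z by omega,
    show z+2-1 = z+1 by omega]

lemma getD_rr (n m i : ℕ) : (List.replicate n AB.a ++ List.replicate m AB.b).getD i AB.bot
    = if i < n then AB.a else if i < n + m then AB.b else AB.bot := by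
  rcases lt_or_ge i n with h | h
  · rw [List.getD_append _ _ _ _ (by simpa using h)]
    simp [List.getD_eq_getElem?_getD, List.getElem?_replicate, h]
  · rcases lt_or_ge i (n+m) with h2 | h2
    · rw [List.getD_eq_getElem?_getD, List.getElem?_append_right (by simpa using h),
        List.getElem?_replicate]
      simp only [List.length_replicate]
      rw [if_pos (by omega), if_neg (by omega), if_pos (by omega)]
      rfl
    · rw [List.getD_eq_getElem?_getD, List.getElem?_append_right (by simpa using h),
        List.getElem?_replicate]
      simp only [List.length_replicate]
      rw [if_neg (by omega), if_neg (by omega), if_neg (by omega)]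
      rfl

def pat (k n : ℕ) : ℤ → AB := fun z =>
  if -(n:ℤ) ≤ z ∧ z < (k:ℤ) then AB.a
  else if (k:ℤ) ≤ z ∧ z ≤ (k:ℤ) + (n:ℤ) then AB.b else AB.bot

lemma pat_step (k n : ℕ) (hk : 1 ≤ k) : glob 1 fab (pat k n) = pat k (n+1) := by
  have hk' : (1:ℤ) ≤ (k:ℤ) := by exact_mod_cast hk
  funext z
  rw [glob_fab]
  unfold pat
  push_cast
  split_ifs <;> first | rfl | omega

lemma iter_pat (k : ℕ) (hk : 1 ≤ k) (n : ℕ) :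
    (glob 1 fab)^[n] (padW AB.bot (List.replicate k AB.a ++ [AB.b])) = pat k n := by
  induction n with
  | zero =>
    funext z
    show padW AB.bot _ z = pat k 0 z
    unfold padW pat
    rw [show ([AB.b] : List AB) = List.replicate 1 AB.b from rfl, getD_rr]
    simp only [List.length_append, List.length_replicate]
    split_ifs <;> first | rfl | (exfalso; omega)
  | succ n ih =>
    rw [Function.iterate_succ_apply', ih, pat_step k n hk]

lemma padW_in (w : List AB) (i : ℕ) (hi : i < w.length) : padW AB.bot w (i:ℤ) = w[i] := by
  unfold padW
  rw [if_pos ⟨Int.ofNat_nonneg i, by exact_mod_cast hi⟩]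
  simp [List.getD_eq_getElem?_getD, List.getElem?_eq_getElem hi]

lemma padW_out (w : List AB) (z : ℤ) (hz : z < 0 ∨ (w.length:ℤ) ≤ z) :
    padW AB.bot w z = AB.bot := by
  unfold padW
  rw [if_neg (by omega)]

lemma pat_eq_bot_iff (k n : ℕ) (z : ℤ) :
    pat k n z = AB.bot ↔ (z < -(n:ℤ) ∨ (k:ℤ)+(n:ℤ) < z) := by
  unfold pat
  split_ifs <;> simp <;> omega

/-- Starting from `⊥^ω a^k b ⊥^ω` (`k ≥ 1`, with `a^k` at positions `0,…,k-1` and `b` at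
position `k`), one has `G^n = ⊥^ω a^{k+n} b^{n+1} ⊥^ω`, and the language generated from the
regular set of initial configurations `{⊥^ω a^k b ⊥^ω | k ≥ 1}` (of `⊥`-free words, up to
position shift) equals `{aⁿ bᵐ | n ≥ m ≥ 1}`. -/
theorem stmt9 :
    (∀ (k : ℕ), 1 ≤ k → ∀ (n : ℕ) (z : ℤ),
      (glob 1 fab)^[n] (padW AB.bot (List.replicate k AB.a ++ [AB.b])) z =
        if -(n : ℤ) ≤ z ∧ z < (k : ℤ) then AB.a
        else if (k : ℤ) ≤ z ∧ z ≤ (k : ℤ) + (n : ℤ) then AB.b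
        else AB.bot) ∧
    ({ w : List AB | AB.bot ∉ w ∧
        ∃ (k : ℕ), 1 ≤ k ∧ ∃ (n : ℕ) (s : ℤ), ∀ z : ℤ,
          (glob 1 fab)^[n] (padW AB.bot (List.replicate k AB.a ++ [AB.b])) z
            = padW AB.bot w (z - s) }
      = { w : List AB | ∃ n m : ℕ, 1 ≤ m ∧ m ≤ n ∧
          w = List.replicate n AB.a ++ List.replicate m AB.b }) := by
  constructor
  · intro k hk n z
    rw [iter_pat k hk n]
    rfl
  · ext w
    simp only [Set.mem_setOf_eq]
    constructor
    · rintro ⟨hbot, k, hk, n, s, h⟩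
      rw [iter_pat k hk n] at h
      have hk' : (1:ℤ) ≤ (k:ℤ) := by exact_mod_cast hk
      -- w is nonempty
      have hw0 : w ≠ [] := by
        intro e
        have hb := h (k:ℤ)
        rw [e] at hb
        rw [padW_out [] _ (by simp; omega)] at hb
        unfold pat at hb
        rw [if_neg (by omega), if_pos ⟨le_refl _, by omega⟩] at hb
        exact AB.noConfusion hb
      have hlen : 0 < w.length := List.length_pos_iff.mpr hw0
      have hnb : ∀ i : ℕ, (hi : i < w.length) → padW AB.bot w (i:ℤ) ≠ AB.bot := by
        intro i hi he
        rw [padW_in w i hi] at he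
        exact hbot (he ▸ List.getElem_mem hi)
      -- bounds from z = s
      have hs1 : ¬(s < -(n:ℤ) ∨ (k:ℤ)+(n:ℤ) < s) := by
        intro hc
        have hb := h s
        rw [sub_self, (pat_eq_bot_iff k n s).mpr hc] at hb
        exact hnb 0 hlen (by exact_mod_cast hb.symm)
      -- z = s - 1 gives bot
      have hs2 : (s - 1) < -(n:ℤ) ∨ (k:ℤ)+(n:ℤ) < s - 1 := by
        have hb := h (s - 1)
        rw [show s - 1 - s = -1 by ring, padW_out w _ (by omega)] at hb
        exact (pat_eq_bot_iff k n (s-1)).mp hb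
      have hs : s = -(n:ℤ) := by omega
      -- right end
      have hr1 : ¬((s + ((w.length - 1 : ℕ):ℤ)) < -(n:ℤ) ∨ (k:ℤ)+(n:ℤ) < s + ((w.length - 1 : ℕ):ℤ)) := by
        intro hc
        have hb := h (s + ((w.length - 1 : ℕ):ℤ))
        rw [show s + ((w.length - 1 : ℕ):ℤ) - s = ((w.length - 1 : ℕ):ℤ) by ring,
          (pat_eq_bot_iff _ _ _).mpr hc] at hb
        exact hnb (w.length - 1) (by omega) hb.symm
      have hr2 : (s + (w.length:ℤ)) < -(n:ℤ) ∨ (k:ℤ)+(n:ℤ) < s + (w.length:ℤ) := by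
        have hb := h (s + (w.length:ℤ))
        rw [show s + (w.length:ℤ) - s = (w.length:ℤ) by ring,
          padW_out w _ (by omega)] at hb
        exact (pat_eq_bot_iff _ _ _).mp hb
      have hlen_eq : w.length = k + 2*n + 1 := by omega
      -- entries
      have hent : ∀ i : ℕ, (hi : i < w.length) →
          w[i] = if i < k + n then AB.a else AB.b := by
        intro i hi
        have hb := h (s + (i:ℤ))
        rw [show s + (i:ℤ) - s = (i:ℤ) by ring, padW_in w i hi] at hb
        rcases lt_or_ge i (k+n) with hc | hc
        · unfold pat at hb
          rw [if_pos ⟨by omega, by omega⟩] at hb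
          rw [if_pos hc]
          exact hb.symm
        · unfold pat at hb
          rw [if_neg (by omega), if_pos ⟨by omega, by omega⟩] at hb
          rw [if_neg (by omega)]
          exact hb.symm
      refine ⟨k + n, n + 1, by omega, by omega, ?_⟩
      apply List.ext_getElem
      · simp [hlen_eq]; omega
      · intro i h1 h2
        have hgr := getD_rr (k+n) (n+1) i
        rw [List.getD_eq_getElem?_getD, List.getElem?_eq_getElem h2] at hgr
        simp only [Option.getD_some] at hgr
        rw [hgr, hent i h1]
        have : i < k + 2*n + 1 := by omega
        split_ifs <;> first | rfl | (exfalso; omega)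
    · rintro ⟨N, M, hM1, hMN, rfl⟩
      refine ⟨?_, N - M + 1, by omega, M - 1, -((M:ℤ) - 1), ?_⟩
      · simp [List.mem_replicate]
      · intro z
        rw [iter_pat _ (by omega)]
        unfold pat padW
        rw [getD_rr]
        simp only [List.length_append, List.length_replicate]
        split_ifs <;> first | rfl | (exfalso; omega)
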